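/- arXiv:2507.06583 — 4 statements merged into one kernel-verified Lean document; each statement's English description precedes it below -/
import Mathlib

section
/- Let n ∈ ℕ and let τ = (τ_1,…,τ_n) ∈ ℝ_+^n satisfy min{τ_1,…,τ_n} > 0 and τ_1 + ⋯ + τ_n = 1. Let Ψ = (ψ_1,…,ψ_n) be an n-tuple of positive, monotonically decreasing functions ψ_i : ℕ → ℝ_+ such that for every sufficiently large N ∈ ℕ, ψ_j(N) ≤ ((log log N)/(2N))^{τ_j/2} for all 1 ≤ j ≤ n. Then for almost every sequence ω in [0,1]^n the following holds: if there is some M > 1 such that Σ_{j=1}^∞ (M^{3^j/2}/√j) · ∏_{i=1}^n ψ_i(M^{3^j}) = ∞, then λ_n(W_ω(Ψ)) = 1. -/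
open MeasureTheory Filter Set Metric
open scoped ENNReal NNReal

noncomputable section

/-- The unit cube `[0,1]^n`. -/
def cube (n : ℕ) : Set (Fin n → ℝ) := Set.univ.pi fun _ => Set.Icc (0 : ℝ) 1

/-- `W_ω(Ψ)`: points of `[0,1]^n` that are coordinate-wise `ψᵢ`-approximable by the
sequence `ω` for infinitely many indices `j`. -/
def WSet (n : ℕ) (ω : ℕ → Fin n → ℝ) (Ψ : Fin n → ℕ → ℝ) : Set (Fin n → ℝ) :=
  {x | x ∈ cube n ∧ ∃ᶠ j in Filter.atTop, ∀ i, |x i - ω j i| < Ψ i j}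

/-- Rectangles `∏ [aᵢ, bᵢ) ⊆ [0,1]^n` with `aᵢ < bᵢ`. -/
def IsRect (n : ℕ) (R : Set (Fin n → ℝ)) : Prop :=
  ∃ a b : Fin n → ℝ, (∀ i, 0 ≤ a i ∧ a i < b i ∧ b i ≤ 1) ∧
    R = Set.univ.pi fun i => Set.Ico (a i) (b i)

open Classical in
/-- `A(R; N, ω)`: the number of indices `1 ≤ j ≤ N` with `ω j ∈ R`. -/
def countIn {n : ℕ} (ω : ℕ → Fin n → ℝ) (R : Set (Fin n → ℝ)) (N : ℕ) : ℕ :=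
  ((Finset.Icc 1 N).filter fun j => ω j ∈ R).card

/-- The discrepancy `D_N(ω)` of the sequence `ω`. -/
def Disc (n : ℕ) (ω : ℕ → Fin n → ℝ) (N : ℕ) : ℝ :=
  sSup {d | ∃ R, IsRect n R ∧ d = |(countIn ω R N : ℝ) / N - (volume R).toReal|}

/-- `ω` is an `(𝒩, v)`-discrepancy satisfying sequence. -/
def IsDSS (n : ℕ) (ω : ℕ → Fin n → ℝ) (Nseq : ℕ → ℕ) (v : ℕ → ℝ) : Prop :=
  StrictMono Nseq ∧ (∀ k, 0 < Nseq k) ∧ (∀ N, 0 < v N) ∧ Antitone v ∧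
    Filter.Tendsto v Filter.atTop (nhds 0) ∧
    (∀ k, Disc n ω (Nseq k) < v (Nseq k)) ∧
    Filter.limsup (fun k => (Nseq k : ℝ) * v (Nseq (k + 1))) Filter.atTop < 1

/-- `f` is `c`-regular with respect to the sequence `Nseq`. -/
def CRegular (f : ℕ → ℝ) (Nseq : ℕ → ℕ) (c : ℝ) : Prop :=
  ∀ᶠ k in Filter.atTop, f (Nseq (k + 1)) ≤ c * f (Nseq k)

/-- `Δ(x, r)`: product of the intervals of radius `rᵢ` about `xᵢ`, intersected with `[0,1]`. -/
def Delta (n : ℕ) (x r : Fin n → ℝ) : Set (Fin n → ℝ) :=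
  Set.univ.pi fun i => Metric.ball (x i) (r i) ∩ Set.Icc 0 1


/-- `μ` is the infinite product on `([0,1]^n)^ℕ` of the Lebesgue (uniform) probability
measure on the unit cube: a probability measure whose finite-dimensional marginals are
products of the Lebesgue measure restricted to the cube. -/
def IsUniformProduct (n : ℕ) (μ : Measure (ℕ → Fin n → ℝ)) : Prop :=
  IsProbabilityMeasure μ ∧
    ∀ (s : Finset ℕ) (f : ℕ → Set (Fin n → ℝ)), (∀ j, MeasurableSet (f j)) →
      μ {ω | ∀ j ∈ s, ω j ∈ f j} = ∏ j ∈ s, volume (f j ∩ cube n)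

/-!
For a fixed `x` in the cube, the events `ω j ∈ ∏ᵢ (xᵢ - ψᵢ(j), xᵢ + ψᵢ(j))` are independent
under the product measure and have probability `≍ ∏ᵢ ψᵢ(j)`, so by the second Borel–Cantelli
lemma `x` is approximated infinitely often for almost every `ω` once `∑_N ∏ᵢ ψᵢ(N) = ∞`; Fubini
turns "for every `x`, almost surely" into "almost surely, for almost every `x`". The series along
`N = M ^ 3 ^ j` can only diverge if the full series does: for decreasing summable `P` the products
`N P(N)` are bounded, which makes the sparse series geometrically small.
-/

open ProbabilityTheory

lemma Antitone.nat_mul_le_tsum {P : ℕ → ℝ} (hP : Antitone P) (hP0 : ∀ N, 0 ≤ P N)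
    (hS : Summable P) (N : ℕ) : N * P N ≤ ∑' k, P k := by
  calc (N : ℝ) * P N = (Finset.range N).card • P N := by simp
    _ ≤ ∑ k ∈ Finset.range N, P k :=
      Finset.card_nsmul_le_sum _ _ _ fun k hk => hP (Finset.mem_range.1 hk).le
    _ ≤ ∑' k, P k := hS.sum_le_tsum _ fun k _ => hP0 k

lemma le_two_mul_natFloor {x : ℝ} (hx : 1 ≤ x) : x ≤ 2 * ⌊x⌋₊ := by
  have h1 : (1 : ℝ) ≤ ⌊x⌋₊ := by exact_mod_cast (Nat.one_le_floor_iff x).2 hx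
  linarith [Nat.lt_floor_add_one x]

lemma div_sqrt_natCast_le {a : ℝ} (ha : 0 ≤ a) (j : ℕ) : a / √j ≤ a := by
  rcases j.eq_zero_or_pos with rfl | hj
  · simpa using ha
  · exact div_le_self ha (Real.one_le_sqrt.2 (by exact_mod_cast hj))

lemma Antitone.summable_sparse_of_summable {P : ℕ → ℝ} (hP : Antitone P) {M : ℝ} (hM : 1 < M)
    (hP0 : ∀ N, 0 ≤ P N) (hS : Summable P) :
    Summable fun j : ℕ => √(M ^ 3 ^ j) / √j * P ⌊M ^ 3 ^ j⌋₊ := by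
  set T := ∑' N, P N
  have hsqrtM : 1 < √M := Real.lt_sqrt_of_sq_lt (by simpa using hM)
  refine Summable.of_nonneg_of_le (fun j => by have := hP0 ⌊M ^ 3 ^ j⌋₊; positivity)
    (fun j => ?_) ((summable_geometric_of_lt_one (by positivity)
      (inv_lt_one_of_one_lt₀ hsqrtM)).mul_left (2 * T))
  set x := M ^ 3 ^ j
  have hx : 1 ≤ x := one_le_pow₀ hM.le
  have hs : (√M) ^ j ≤ √x := by
    rw [Real.le_sqrt (by positivity) (by positivity), ← pow_mul, mul_comm, pow_mul,
      Real.sq_sqrt (by positivity)]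
    exact pow_le_pow_right₀ hM.le (Nat.lt_pow_self (by norm_num)).le
  have hxP : √x * (√x * P ⌊x⌋₊) ≤ 2 * T := by
    rw [← mul_assoc, Real.mul_self_sqrt (by positivity)]
    calc x * P ⌊x⌋₊ ≤ 2 * ⌊x⌋₊ * P ⌊x⌋₊ :=
          mul_le_mul_of_nonneg_right (le_two_mul_natFloor hx) (hP0 _)
      _ ≤ 2 * T := by rw [mul_assoc]; gcongr; exact hP.nat_mul_le_tsum hP0 hS _
  calc √x / √j * P ⌊x⌋₊ ≤ √x * P ⌊x⌋₊ :=
        mul_le_mul_of_nonneg_right (div_sqrt_natCast_le (by positivity) j) (hP0 _)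
    _ ≤ 2 * T / √x := by rw [le_div_iff₀ (by positivity), mul_comm]; exact hxP
    _ ≤ 2 * T / (√M) ^ j := by
        gcongr
        exact mul_nonneg zero_le_two (tsum_nonneg hP0)
    _ = 2 * T * (√M)⁻¹ ^ j := by rw [inv_pow, div_eq_mul_inv]

lemma le_max_one_mul_min_one {r R : ℝ} (hr : 0 ≤ r) (hrR : r ≤ R) : r ≤ max R 1 * min r 1 := by
  rcases le_total r 1 with h | h
  · rw [min_eq_left h]; exact le_mul_of_one_le_left hr (le_max_right _ _)
  · rw [min_eq_right h, mul_one]; exact hrR.trans (le_max_left _ _)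

lemma tsum_ofReal_prod_min_one_eq_top {ι : Type*} [Fintype ι] {Ψ : ι → ℕ → ℝ}
    (hΨ : ∀ i N, 0 ≤ Ψ i N) (hanti : ∀ i, Antitone (Ψ i))
    (hdiv : ¬ Summable fun N => ∏ i, Ψ i N) :
    ∑' N, ENNReal.ofReal (∏ i, min (Ψ i N) 1) = ∞ := by
  have hmin0 : ∀ N, 0 ≤ ∏ i, min (Ψ i N) 1 :=
    fun N => Finset.prod_nonneg fun i _ => le_min (hΨ i N) zero_le_one
  have hle : ∀ N, ∏ i, Ψ i N ≤ (∏ i, max (Ψ i 0) 1) * ∏ i, min (Ψ i N) 1 := fun N => by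
    rw [← Finset.prod_mul_distrib]
    exact Finset.prod_le_prod (fun i _ => hΨ i N)
      fun i _ => le_max_one_mul_min_one (hΨ i N) (hanti i N.zero_le)
  by_contra htop
  refine hdiv (Summable.of_nonneg_of_le (fun N => Finset.prod_nonneg fun i _ => hΨ i N)
    (fun N => (hle N).trans_eq ?_) ((ENNReal.summable_toReal htop).mul_left (∏ i, max (Ψ i 0) 1)))
  rw [ENNReal.toReal_ofReal (hmin0 N)]

lemma ofReal_min_le_volume_ball_inter_Icc {c r : ℝ} (hr : 0 < r) (hc : c ∈ Icc (0 : ℝ) 1) :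
    ENNReal.ofReal (min r 1) ≤ volume (ball c r ∩ Icc 0 1) := by
  set m := min r 1
  have hmr : m ≤ r := min_le_left _ _
  have hm0 : 0 < m := lt_min hr one_pos
  -- an interval of length `m` inside `[0, 1]` within distance `m` of `c`
  obtain ⟨a, ha0, hac, ham, hca⟩ : ∃ a, 0 ≤ a ∧ a ≤ c ∧ a + m ≤ 1 ∧ c - a ≤ m := by
    rcases le_total c (1 - m) with h | h
    · exact ⟨c, hc.1, le_rfl, by linarith, by linarith⟩
    · exact ⟨1 - m, by linarith [min_le_right r 1], h, by linarith, by linarith [hc.2]⟩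
  calc ENNReal.ofReal m = volume (Ioo a (a + m)) := by rw [Real.volume_Ioo, add_sub_cancel_left]
    _ ≤ _ := by
      refine measure_mono fun y hy => ?_
      obtain ⟨hy₁, hy₂⟩ := hy
      refine ⟨?_, by linarith, by linarith⟩
      rw [mem_ball, Real.dist_eq, abs_lt]
      constructor <;> linarith

lemma measurableSet_cube (n : ℕ) : MeasurableSet (cube n) :=
  MeasurableSet.univ_pi fun _ => measurableSet_Icc

lemma volume_cube (n : ℕ) : volume (cube n) = 1 := by
  rw [cube, volume_pi_pi]
  simp

lemma ofReal_prod_min_le_volume_pi_ball_inter_cube {n : ℕ} {x r : Fin n → ℝ} (hx : x ∈ cube n)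
    (hr : ∀ i, 0 < r i) :
    ENNReal.ofReal (∏ i, min (r i) 1) ≤ volume ((univ.pi fun i => ball (x i) (r i)) ∩ cube n) := by
  rw [cube, ← pi_inter_distrib, volume_pi_pi,
    ENNReal.ofReal_prod_of_nonneg fun i _ => (lt_min (hr i) one_pos).le]
  exact Finset.prod_le_prod' fun i _ => ofReal_min_le_volume_ball_inter_Icc (hr i) (hx i trivial)

namespace IsUniformProduct

variable {n : ℕ} {μ : Measure (ℕ → Fin n → ℝ)}

lemma measure_iInter_mem (hμ : IsUniformProduct n μ) {f : ℕ → Set (Fin n → ℝ)}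
    (hf : ∀ j, MeasurableSet (f j)) (t : Finset ℕ) :
    μ (⋂ j ∈ t, {ω | ω j ∈ f j}) = ∏ j ∈ t, volume (f j ∩ cube n) := by
  rw [← hμ.2 t f hf]
  congr 1
  ext ω
  simp

lemma ae_frequently_mem (hμ : IsUniformProduct n μ) {f : ℕ → Set (Fin n → ℝ)}
    (hf : ∀ j, MeasurableSet (f j)) (hdiv : ∑' j, volume (f j ∩ cube n) = ∞) :
    ∀ᵐ ω ∂μ, ∃ᶠ j in atTop, ω j ∈ f j := by
  have : IsProbabilityMeasure μ := hμ.1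
  set s : ℕ → Set (ℕ → Fin n → ℝ) := fun j => {ω | ω j ∈ f j}
  have hsm : ∀ j, MeasurableSet (s j) := fun j => measurable_pi_apply j (hf j)
  have hs : ∀ j, μ (s j) = volume (f j ∩ cube n) := fun j => by
    simpa using hμ.measure_iInter_mem hf {j}
  have hindep : iIndepSet s μ := (iIndepSet_iff_meas_biInter hsm).2 fun t => by
    simp only [hs, s, hμ.measure_iInter_mem hf]
  have hlimsup := measure_limsup_eq_one hsm hindep (by simpa only [hs] using hdiv)
  have hmeas := (MeasurableSet.measurableSet_limsup hsm).nullMeasurableSet (μ := μ)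
  filter_upwards [(ae_mem_iff_measure_eq hmeas).2 (by rw [hlimsup, measure_univ])] with ω hω
  exact mem_limsup_iff_frequently_mem.1 hω

lemma ae_frequently_approx (hμ : IsUniformProduct n μ) {Ψ : Fin n → ℕ → ℝ}
    (hΨ : ∀ i N, 0 < Ψ i N) (hdiv : ∑' N, ENNReal.ofReal (∏ i, min (Ψ i N) 1) = ∞)
    {x : Fin n → ℝ} (hx : x ∈ cube n) :
    ∀ᵐ ω ∂μ, ∃ᶠ j in atTop, ∀ i, |x i - ω j i| < Ψ i j := by
  have hvol : ∑' j, volume ((univ.pi fun i => ball (x i) (Ψ i j)) ∩ cube n) = ∞ :=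
    top_le_iff.1 <| hdiv ▸ ENNReal.tsum_le_tsum fun j =>
      ofReal_prod_min_le_volume_pi_ball_inter_cube hx (hΨ · j)
  filter_upwards [hμ.ae_frequently_mem (fun j => .univ_pi fun i => measurableSet_ball) hvol]
    with ω hω
  refine hω.mono fun j hj i => ?_
  rw [abs_sub_comm, ← Real.dist_eq]
  exact hj i trivial

end IsUniformProduct

lemma measurableSet_frequently_approx {n : ℕ} (Ψ : Fin n → ℕ → ℝ) :
    MeasurableSet {q : (Fin n → ℝ) × (ℕ → Fin n → ℝ) |
      ∃ᶠ j in atTop, ∀ i, |q.1 i - q.2 j i| < Ψ i j} := by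
  have hlimsup : {q : (Fin n → ℝ) × (ℕ → Fin n → ℝ) |
      ∃ᶠ j in atTop, ∀ i, |q.1 i - q.2 j i| < Ψ i j} =
      limsup (fun j => {q | ∀ i, |q.1 i - q.2 j i| < Ψ i j}) atTop := by
    ext q
    rw [mem_limsup_iff_frequently_mem]
    rfl
  rw [hlimsup]
  refine .measurableSet_limsup fun j => ?_
  simp_rw [ofPred_forall]
  exact .iInter fun i => measurableSet_lt (by fun_prop) measurable_const

lemma ae_volume_WSet_eq_one {n : ℕ} {μ : Measure (ℕ → Fin n → ℝ)} [SFinite μ]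
    (Ψ : Fin n → ℕ → ℝ)
    (h : ∀ x ∈ cube n, ∀ᵐ ω ∂μ, ∃ᶠ j in atTop, ∀ i, |x i - ω j i| < Ψ i j) :
    ∀ᵐ ω ∂μ, volume (WSet n ω Ψ) = 1 := by
  have hswap := (Measure.ae_ae_comm (measurableSet_frequently_approx Ψ)).1
    (ae_restrict_of_forall_mem (μ := volume) (measurableSet_cube n) h)
  filter_upwards [hswap] with ω hω
  calc volume (WSet n ω Ψ)
      = volume.restrict (cube n) {x | ∃ᶠ j in atTop, ∀ i, |x i - ω j i| < Ψ i j} := by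
        rw [Measure.restrict_apply' (measurableSet_cube n), inter_comm]
        rfl
    _ = volume.restrict (cube n) univ := measure_congr (ae_eq_univ.2 (ae_iff.1 hω))
    _ = 1 := by rw [Measure.restrict_apply_univ, volume_cube]

theorem stmt_1_general (n : ℕ)
    (Ψ : Fin n → ℕ → ℝ) (hΨpos : ∀ i N, 0 < Ψ i N) (hΨanti : ∀ i, Antitone (Ψ i))
    (μ : Measure (ℕ → Fin n → ℝ)) (hμ : IsUniformProduct n μ) :
    ∀ᵐ ω ∂μ, (∃ M : ℝ, 1 < M ∧
        ¬ Summable fun j : ℕ =>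
          Real.sqrt (M ^ 3 ^ j) / Real.sqrt j * ∏ i, Ψ i ⌊M ^ 3 ^ j⌋₊) →
      volume (WSet n ω Ψ) = 1 := by
  have : IsProbabilityMeasure μ := hμ.1
  rw [eventually_imp_distrib_left]
  rintro ⟨M, hM, hdiv⟩
  have hΨ0 : ∀ i N, 0 ≤ Ψ i N := fun i N => (hΨpos i N).le
  have hanti : Antitone fun N => ∏ i, Ψ i N := fun a b hab =>
    Finset.prod_le_prod (fun i _ => hΨ0 i b) fun i _ => hΨanti i hab
  have hP0 : ∀ N, 0 ≤ ∏ i, Ψ i N := fun N => Finset.prod_nonneg fun i _ => hΨ0 i N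
  have hP : ¬ Summable fun N => ∏ i, Ψ i N :=
    fun hS => absurd (hanti.summable_sparse_of_summable hM hP0 hS) hdiv
  exact ae_volume_WSet_eq_one Ψ fun x hx =>
    hμ.ae_frequently_approx hΨpos (tsum_ofReal_prod_min_one_eq_top hΨ0 hΨanti hP) hx

/-- Theorem 2: for almost every sequence `ω` in `[0,1]^n`, a divergence condition along
the sparse sequence `M^(3^j)` implies full measure of `W_ω(Ψ)`. -/
theorem stmt_1 (n : ℕ) (τ : Fin n → ℝ) (hτpos : ∀ i, 0 < τ i) (hτsum : ∑ i, τ i = 1)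
    (Ψ : Fin n → ℕ → ℝ) (hΨpos : ∀ i N, 0 < Ψ i N) (hΨanti : ∀ i, Antitone (Ψ i))
    (hineq : ∀ᶠ N in Filter.atTop, ∀ i,
      Ψ i N ≤ (Real.log (Real.log N) / (2 * N)) ^ (τ i / 2))
    (μ : Measure (ℕ → Fin n → ℝ)) (hμ : IsUniformProduct n μ) :
    ∀ᵐ ω ∂μ, (∃ M : ℝ, 1 < M ∧
        ¬ Summable fun j : ℕ =>
          Real.sqrt (M ^ 3 ^ j) / Real.sqrt j * ∏ i, Ψ i ⌊M ^ 3 ^ j⌋₊) →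
      volume (WSet n ω Ψ) = 1 :=
  stmt_1_general n Ψ hΨpos hΨanti μ hμ
end
end

section
/- Let n ∈ ℕ, let ω be an (𝒩,v)-discrepancy satisfying sequence in [0,1]^n with 𝒩 = (N_k)_{k≥1}, and let ρ = (ρ_1,…,ρ_n) be an n-tuple of functions ρ_i : ℕ → ℝ_+ such that each ρ_i(N) → 0 as N → ∞ and ∏_{i=1}^n ρ_i(N) = v(N) for all N ∈ 𝒩. Then for any ball B ⊆ [0,1]^n, lim_{k→∞} λ_n( B ∩ ⋃_{j=1}^{N_k} Δ(ω_j, ρ(N_k)) ) = λ_n(B). -/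
open MeasureTheory Filter Set Metric
open scoped ENNReal NNReal

noncomputable section

/-- Lemma (uniform Dirichlet): for an `(𝒩,v)`-d.s.s. sequence, the rectangles
`Δ(ω_j, ρ(N_k))`, `1 ≤ j ≤ N_k`, asymptotically cover any ball in measure. -/
theorem stmt_11 (n : ℕ) (ω : ℕ → Fin n → ℝ) (hω : ∀ j, ω j ∈ cube n)
    (Nseq : ℕ → ℕ) (v : ℕ → ℝ) (hdss : IsDSS n ω Nseq v)
    (ρ : Fin n → ℕ → ℝ) (hρpos : ∀ i N, 0 < ρ i N)
    (hρ0 : ∀ i, Filter.Tendsto (ρ i) Filter.atTop (nhds 0))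
    (hρv : ∀ k, ∏ i, ρ i (Nseq k) = v (Nseq k))
    (x : Fin n → ℝ) (ε : ℝ) (hε : 0 < ε) (hB : Metric.ball x ε ⊆ cube n) :
    Filter.Tendsto
      (fun k => volume (Metric.ball x ε ∩
        ⋃ j ∈ Set.Icc 1 (Nseq k), Delta n (ω j) fun i => ρ i (Nseq k)))
      Filter.atTop (nhds (volume (Metric.ball x ε))) := by
  classical
  -- `Nseq k → ∞`, so `ρ i (Nseq k) → 0`; eventually all `ρ i (Nseq k) ≤ 1`.
  have hNseq : Filter.Tendsto Nseq Filter.atTop Filter.atTop := hdss.1.tendsto_atTop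
  have hev : ∀ᶠ k in Filter.atTop, ∀ i, ρ i (Nseq k) ≤ 1 := by
    rw [Filter.eventually_all]
    intro i
    have h0 : Filter.Tendsto (fun k => ρ i (Nseq k)) Filter.atTop (nhds 0) :=
      (hρ0 i).comp hNseq
    filter_upwards [h0.eventually (eventually_le_nhds (by norm_num : (0:ℝ) < 1))] with k hk
    exact hk
  apply Filter.Tendsto.congr' _ tendsto_const_nhds
  filter_upwards [hev] with k hk
  -- It suffices to show the ball is entirely covered.
  have hcover : Metric.ball x ε ⊆
      ⋃ j ∈ Set.Icc 1 (Nseq k), Delta n (ω j) fun i => ρ i (Nseq k) := by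
    intro y hy
    by_contra hnot
    set r : Fin n → ℝ := fun i => ρ i (Nseq k) with hr
    have hrpos : ∀ i, 0 < r i := fun i => hρpos i (Nseq k)
    have hycube : y ∈ cube n := hB hy
    have hy01 : ∀ i, y i ∈ Set.Icc (0:ℝ) 1 := fun i => hycube i (Set.mem_univ i)
    -- y is in the open interior of the cube
    have hδ : 0 < (ε - dist y x) / 2 := by
      have := mem_ball.1 hy
      linarith
    set δ := (ε - dist y x) / 2 with hδdef
    have hupd : ∀ i t, |t - y i| ≤ δ → Function.update y i t ∈ cube n := by
      intro i t ht
      apply hB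
      rw [mem_ball]
      have h1 : dist (Function.update y i t) y ≤ |t - y i| := by
        refine (dist_pi_le_iff (abs_nonneg _)).2 fun b => ?_
        rcases eq_or_ne b i with rfl | hb
        · simp [Function.update_self, Real.dist_eq]
        · simp [Function.update_of_ne hb]
      calc dist (Function.update y i t) x
          ≤ dist (Function.update y i t) y + dist y x := dist_triangle _ _ _
        _ ≤ |t - y i| + dist y x := by linarith
        _ ≤ δ + dist y x := by linarith
        _ < ε := by rw [hδdef]; linarith [mem_ball.1 hy]
    have hystrict : ∀ i, 0 < y i ∧ y i < 1 := by
      intro i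
      constructor
      · have h1 := hupd i (y i - δ) (by rw [abs_of_nonpos] <;> linarith)
        have h2 : y i - δ ∈ Set.Icc (0:ℝ) 1 := by
          have := h1 i (Set.mem_univ i)
          simpa [Function.update_self] using this
        linarith [h2.1]
      · have h1 := hupd i (y i + δ) (by rw [abs_of_nonneg] <;> linarith)
        have h2 : y i + δ ∈ Set.Icc (0:ℝ) 1 := by
          have := h1 i (Set.mem_univ i)
          simpa [Function.update_self] using this
        linarith [h2.2]
    -- the bad rectangle
    set a : Fin n → ℝ := fun i => min (1 - r i) (y i) with ha
    set b : Fin n → ℝ := fun i => a i + r i with hbdef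
    have hab : ∀ i, 0 ≤ a i ∧ a i < b i ∧ b i ≤ 1 := by
      intro i
      refine ⟨le_min (by linarith [hk i]) (hystrict i).1.le, ?_, ?_⟩
      · show a i < a i + r i
        linarith [hrpos i]
      · show a i + r i ≤ 1
        have : a i ≤ 1 - r i := min_le_left _ _
        linarith
    set R : Set (Fin n → ℝ) := Set.univ.pi fun i => Set.Ico (a i) (b i) with hR
    have hRsub : ∀ i, Set.Ico (a i) (b i) ⊆ Metric.ball (y i) (r i) := by
      intro i t ht
      have ht1 : a i ≤ t := ht.1
      have ht2 : t < b i := ht.2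
      have hagt : y i - r i < a i := by
        apply lt_min
        · linarith [(hystrict i).2]
        · linarith [hrpos i]
      have hble : b i ≤ y i + r i := by
        have : a i ≤ y i := min_le_right _ _
        show a i + r i ≤ y i + r i
        linarith
      rw [mem_ball, Real.dist_eq, abs_lt]
      constructor <;> linarith
    -- no ω j lies in R for 1 ≤ j ≤ Nseq k
    have hno : ∀ j ∈ Finset.Icc 1 (Nseq k), ω j ∉ R := by
      intro j hj hmem
      apply hnot
      rw [Set.mem_iUnion₂]
      refine ⟨j, Finset.mem_Icc.1 hj |> fun h => Set.mem_Icc.2 h, ?_⟩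
      intro i _
      refine ⟨?_, hy01 i⟩
      -- show y i ∈ ball (ω j i) (r i); from ω j i ∈ Ico a b ⊆ ball (y i) (r i)
      have := hRsub i (hmem i (Set.mem_univ i))
      rw [mem_ball] at this ⊢
      rwa [dist_comm]
    have hcount : countIn ω R (Nseq k) = 0 := by
      rw [countIn, Finset.card_eq_zero, Finset.filter_eq_empty_iff]
      intro j hj
      exact hno j hj
    have hvolR : (volume R).toReal = v (Nseq k) := by
      rw [hR, volume_pi_pi]
      have : ∀ i, volume (Set.Ico (a i) (b i)) = ENNReal.ofReal (r i) := by
        intro i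
        rw [Real.volume_Ico]
        congr 1
        show a i + r i - a i = r i
        ring
      rw [Finset.prod_congr rfl fun i _ => this i, ENNReal.toReal_prod]
      rw [← hρv k]
      exact Finset.prod_congr rfl fun i _ => ENNReal.toReal_ofReal (hrpos i).le
    -- v (Nseq k) belongs to the discrepancy set
    have hmemset : v (Nseq k) ∈
        {d | ∃ R', IsRect n R' ∧
          d = |(countIn ω R' (Nseq k) : ℝ) / (Nseq k) - (volume R').toReal|} := by
      refine ⟨R, ⟨a, b, hab, hR⟩, ?_⟩
      rw [hcount, hvolR]
      simp [abs_of_nonneg (hdss.2.2.1 (Nseq k)).le]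
    -- the discrepancy set is bounded above by 1
    have hbdd : BddAbove {d | ∃ R', IsRect n R' ∧
        d = |(countIn ω R' (Nseq k) : ℝ) / (Nseq k) - (volume R').toReal|} := by
      refine ⟨1, fun d hd => ?_⟩
      obtain ⟨R', ⟨a', b', hab', hR'⟩, rfl⟩ := hd
      have hNpos : 0 < (Nseq k : ℝ) := Nat.cast_pos.2 (hdss.2.1 k)
      have hc1 : (countIn ω R' (Nseq k) : ℝ) / (Nseq k) ≤ 1 := by
        rw [div_le_one hNpos]
        have : countIn ω R' (Nseq k) ≤ (Finset.Icc 1 (Nseq k)).card :=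
          Finset.card_filter_le _ _
        rw [Nat.card_Icc] at this
        exact_mod_cast le_trans this (by omega)
      have hc0 : (0:ℝ) ≤ (countIn ω R' (Nseq k) : ℝ) / (Nseq k) :=
        div_nonneg (Nat.cast_nonneg _) hNpos.le
      have hv1 : (volume R').toReal ≤ 1 := by
        have hsub : R' ⊆ cube n := by
          rw [hR', cube]
          refine Set.pi_mono fun i _ => ?_
          intro t ht
          exact ⟨le_trans (hab' i).1 ht.1, le_trans ht.2.le (hab' i).2.2⟩
        have hcube : volume (cube n) = 1 := by
          rw [cube, volume_pi_pi]
          simp [Real.volume_Icc]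
        have := measure_mono (μ := (volume : Measure (Fin n → ℝ))) hsub
        rw [hcube] at this
        calc (volume R').toReal ≤ (1 : ℝ≥0∞).toReal :=
              ENNReal.toReal_mono (by simp) this
          _ = 1 := by simp
      have hv0 : (0:ℝ) ≤ (volume R').toReal := ENNReal.toReal_nonneg
      rw [abs_le]
      constructor <;> linarith
    have hle : v (Nseq k) ≤ Disc n ω (Nseq k) := le_csSup hbdd hmemset
    exact absurd (hdss.2.2.2.2.2.1 k) (not_lt.2 hle)
  rw [Set.inter_eq_left.mpr hcover]
end
end

section
/- Let n ∈ ℕ and let ω be a uniformly distributed sequence in [0,1]^n. Then there exist a strictly increasing sequence 𝒩 = (N_i)_{i≥1} of positive integers and a monotonically decreasing function v : ℕ → ℝ_+ with v(N) → 0 as N → ∞ such that D_{N_i}(ω) < v(N_i) for all i ∈ ℕ and limsup_{i→∞} N_{i−1} v(N_i) < 1; that is, ω is an (𝒩,v)-discrepancy satisfying sequence. -/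
/-!
Uniform distribution gives convergence of the counting ratios simultaneously on the finitely
many boxes of a grid of mesh `1/m`. Every box in the unit cube lies between two grid boxes whose
volumes differ from its own by at most `2n/m`, so the discrepancy tends to zero.

Along any sequence with `liminf D_N = 0` choose `N_{k+1} > N_k` with `D_{N_{k+1}} < 1/(2N_k+1)`,
and let `v` be the step function equal to `1/(2N_k+1)` on `[N_{k+1}, N_{k+2})`. Then `v` is
decreasing, tends to zero, and `N_k v(N_{k+1}) < 1/2`.
-/

open MeasureTheory Filter Set Metric
open scoped ENNReal NNReal

noncomputable section

/-- `ω` is uniformly distributed on `[0,1]^n`. -/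
def IsUD (n : ℕ) (ω : ℕ → Fin n → ℝ) : Prop :=
  ∀ R : Set (Fin n → ℝ), IsRect n R →
    Filter.Tendsto (fun N => (countIn ω R N : ℝ) / N) Filter.atTop
      (nhds (volume R).toReal)

lemma prod_sub_prod_le_sum_sub {ι : Type*} (s : Finset ι) {l r : ι → ℝ}
    (h0 : ∀ i ∈ s, 0 ≤ l i) (hlr : ∀ i ∈ s, l i ≤ r i) (hr1 : ∀ i ∈ s, r i ≤ 1) :
    ∏ i ∈ s, r i - ∏ i ∈ s, l i ≤ ∑ i ∈ s, (r i - l i) := by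
  classical
  induction s using Finset.induction_on with
  | empty => simp
  | insert a s ha ih =>
    simp only [Finset.mem_insert, forall_eq_or_imp] at h0 hlr hr1
    have hlr' : ∏ i ∈ s, l i ≤ ∏ i ∈ s, r i := Finset.prod_le_prod h0.2 hlr.2
    have hr1' : ∏ i ∈ s, r i ≤ 1 :=
      Finset.prod_le_one (fun i hi => (h0.2 i hi).trans (hlr.2 i hi)) hr1.2
    rw [Finset.prod_insert ha, Finset.prod_insert ha, Finset.sum_insert ha]
    -- `r R - l L = (r - l) R + l (R - L)` with `R ≤ 1` and `l ≤ 1`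
    nlinarith [ih h0.2 hlr.2 hr1.2, mul_nonneg (sub_nonneg.2 hlr.1) (sub_nonneg.2 hr1'),
      mul_nonneg (sub_nonneg.2 (hlr.1.trans hr1.1)) (sub_nonneg.2 hlr')]

lemma volume_pi_Ico_toReal_le_add {ι : Type*} [Fintype ι] {a b a' b' : ι → ℝ} {δ : ℝ}
    (ha' : ∀ i, 0 ≤ a' i) (hb' : ∀ i, b' i ≤ 1)
    (ha : ∀ i, a' i ≤ a i ∧ a i ≤ a' i + δ) (hb : ∀ i, b i ≤ b' i ∧ b' i ≤ b i + δ) :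
    (volume (univ.pi fun i => Ico (a' i) (b' i))).toReal ≤
      (volume (univ.pi fun i => Ico (a i) (b i))).toReal + Fintype.card ι * (2 * δ) := by
  simp only [Real.volume_pi_Ico, ENNReal.toReal_prod, ENNReal.toReal_ofReal']
  have hsides : ∀ i, max (b' i - a' i) 0 - max (b i - a i) 0 ≤ 2 * δ := fun i => by
    have := ha i; have := hb i
    rw [sub_le_iff_le_add]
    exact max_le (by linarith [le_max_left (b i - a i) 0])
      (by linarith [le_max_right (b i - a i) 0])
  have key := prod_sub_prod_le_sum_sub Finset.univ (l := fun i => max (b i - a i) 0)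
    (r := fun i => max (b' i - a' i) 0) (fun i _ => le_max_right _ _)
    (fun i _ => max_le_max_right 0 (by linarith [ha i, hb i]))
    (fun i _ => max_le (by linarith [ha' i, hb' i]) zero_le_one)
  have hsum := Finset.sum_le_card_nsmul Finset.univ _ _ fun i _ => hsides i
  simp only [nsmul_eq_mul, Finset.card_univ] at hsum
  linarith

lemma countIn_mono {n : ℕ} (ω : ℕ → Fin n → ℝ) {R R' : Set (Fin n → ℝ)} (h : R ⊆ R') (N : ℕ) :
    countIn ω R N ≤ countIn ω R' N := by
  classical
  exact Finset.card_le_card (Finset.monotone_filter_right _ fun j _ => @h (ω j))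

lemma abs_countIn_div_sub_le_of_subset {n : ℕ} {ω : ℕ → Fin n → ℝ} {L R U : Set (Fin n → ℝ)}
    {N : ℕ} {ε δ : ℝ} (hLR : L ⊆ R) (hRU : R ⊆ U)
    (hL : |(countIn ω L N : ℝ) / N - (volume L).toReal| ≤ ε)
    (hU : |(countIn ω U N : ℝ) / N - (volume U).toReal| ≤ ε)
    (hvL : (volume R).toReal ≤ (volume L).toReal + δ)
    (hvU : (volume U).toReal ≤ (volume R).toReal + δ) :
    |(countIn ω R N : ℝ) / N - (volume R).toReal| ≤ ε + δ := by
  have hcL : (countIn ω L N : ℝ) / N ≤ countIn ω R N / N := by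
    gcongr; exact countIn_mono ω hLR N
  have hcU : (countIn ω R N : ℝ) / N ≤ countIn ω U N / N := by
    gcongr; exact countIn_mono ω hRU N
  rw [abs_le] at *
  constructor <;> linarith

lemma tendsto_countIn_div_pi_Ico {n : ℕ} {ω : ℕ → Fin n → ℝ} (hud : IsUD n ω) {a b : Fin n → ℝ}
    (ha : ∀ i, 0 ≤ a i) (hb : ∀ i, b i ≤ 1) :
    Tendsto (fun N => (countIn ω (univ.pi fun i => Ico (a i) (b i)) N : ℝ) / N) atTop
      (nhds (volume (univ.pi fun i => Ico (a i) (b i))).toReal) := by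
  by_cases hab : ∀ i, a i < b i
  · exact hud _ ⟨a, b, fun i => ⟨ha i, hab i, hb i⟩, rfl⟩
  · obtain ⟨i, hi⟩ := not_forall.1 hab
    rw [univ_pi_eq_empty (t := fun i => Ico (a i) (b i)) (Ico_eq_empty hi)]
    simp [countIn]

lemma natFloor_mul_div_mem_Icc {x : ℝ} (hx : 0 ≤ x) {m : ℕ} (hm : 0 < m) :
    (⌊x * m⌋₊ : ℝ) / m ∈ Icc (x - 1 / m) x := by
  have hm' : (0 : ℝ) < m := by exact_mod_cast hm
  rw [mem_Icc, sub_le_iff_le_add, ← add_div, le_div_iff₀ hm', div_le_iff₀ hm']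
  exact ⟨(Nat.lt_floor_add_one _).le, Nat.floor_le (by positivity)⟩

lemma natCeil_mul_div_mem_Icc {x : ℝ} (hx : 0 ≤ x) {m : ℕ} (hm : 0 < m) :
    (⌈x * m⌉₊ : ℝ) / m ∈ Icc x (x + 1 / m) := by
  have hm' : (0 : ℝ) < m := by exact_mod_cast hm
  rw [mem_Icc, le_div_iff₀ hm', div_le_iff₀ hm', add_mul, one_div_mul_cancel hm'.ne']
  exact ⟨Nat.le_ceil _, (Nat.ceil_lt_add_one (by positivity)).le⟩

lemma eventually_forall_grid_abs_le {n : ℕ} {ω : ℕ → Fin n → ℝ} (hud : IsUD n ω) {m : ℕ}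
    (hm : 0 < m) {ε : ℝ} (hε : 0 < ε) :
    ∀ᶠ N in atTop, ∀ p ∈ univ.pi fun _ => Iic m, ∀ q ∈ univ.pi fun _ => Iic m,
      |(countIn ω (univ.pi fun i => Ico (p i / m : ℝ) (q i / m)) N : ℝ) / N -
        (volume (univ.pi fun i => Ico (p i / m : ℝ) (q i / m))).toReal| ≤ ε := by
  have hS : (univ.pi fun (_ : Fin n) => Iic m).Finite := Finite.pi fun _ => finite_Iic m
  refine (eventually_all_finite hS).2 fun p _ => (eventually_all_finite hS).2 fun q hq => ?_
  have hq1 : ∀ i, (q i / m : ℝ) ≤ 1 := fun i => by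
    rw [div_le_one (by exact_mod_cast hm)]; exact_mod_cast hq i (mem_univ i)
  have hlim := tendsto_countIn_div_pi_Ico hud (a := fun i => p i / m) (fun i => by positivity) hq1
  filter_upwards [hlim.eventually (closedBall_mem_nhds _ hε)] with N hN
  rwa [Real.dist_eq] at hN

lemma abs_countIn_div_sub_le_of_forall_grid {n : ℕ} {ω : ℕ → Fin n → ℝ} {m N : ℕ} (hm : 0 < m)
    {ε : ℝ} (hN : ∀ p ∈ univ.pi fun _ => Iic m, ∀ q ∈ univ.pi fun _ => Iic m,
      |(countIn ω (univ.pi fun i => Ico (p i / m : ℝ) (q i / m)) N : ℝ) / N -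
        (volume (univ.pi fun i => Ico (p i / m : ℝ) (q i / m))).toReal| ≤ ε)
    {R : Set (Fin n → ℝ)} (hR : IsRect n R) :
    |(countIn ω R N : ℝ) / N - (volume R).toReal| ≤ ε + n * (2 * (1 / m)) := by
  obtain ⟨a, b, hab, rfl⟩ := hR
  have hm' : (0 : ℝ) < m := by exact_mod_cast hm
  have ha0 i : 0 ≤ a i := (hab i).1
  have hb0 i : 0 ≤ b i := (hab i).1.trans (hab i).2.1.le
  have hb1 i : b i ≤ 1 := (hab i).2.2
  have ha1 i : a i ≤ 1 := (hab i).2.1.le.trans (hb1 i)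
  have hidx : ∀ x : ℝ, x ≤ 1 → ⌊x * m⌋₊ ∈ Iic m ∧ ⌈x * m⌉₊ ∈ Iic m := fun x hx =>
    have : x * m ≤ m := by nlinarith
    ⟨Nat.floor_le_of_le this, Nat.ceil_le.2 this⟩
  have hfa i := natFloor_mul_div_mem_Icc (ha0 i) hm
  have hca i := natCeil_mul_div_mem_Icc (ha0 i) hm
  have hfb i := natFloor_mul_div_mem_Icc (hb0 i) hm
  have hcb i := natCeil_mul_div_mem_Icc (hb0 i) hm
  have hLR : (univ.pi fun i => Ico (⌈a i * m⌉₊ / m : ℝ) (⌊b i * m⌋₊ / m)) ⊆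
      univ.pi fun i => Ico (a i) (b i) :=
    pi_mono fun i _ => Ico_subset_Ico (hca i).1 (hfb i).2
  have hRU : (univ.pi fun i => Ico (a i) (b i)) ⊆
      univ.pi fun i => Ico (⌊a i * m⌋₊ / m : ℝ) (⌈b i * m⌉₊ / m) :=
    pi_mono fun i _ => Ico_subset_Ico (hfa i).2 (hcb i).1
  have hvL := volume_pi_Ico_toReal_le_add (δ := 1 / m) ha0 hb1
    (fun i => ⟨(hca i).1, (hca i).2⟩) (fun i => ⟨(hfb i).2, by linarith [(hfb i).1]⟩)
  have hvU := volume_pi_Ico_toReal_le_add (δ := 1 / m) (fun i => by positivity)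
    (fun i => by rw [div_le_one hm']; exact_mod_cast (hidx _ (hb1 i)).2)
    (fun i => ⟨(hfa i).2, by linarith [(hfa i).1]⟩) (fun i => ⟨(hcb i).1, (hcb i).2⟩)
  rw [Fintype.card_fin] at hvL hvU
  exact abs_countIn_div_sub_le_of_subset hLR hRU
    (hN _ (fun i _ => (hidx _ (ha1 i)).2) _ fun i _ => (hidx _ (hb1 i)).1)
    (hN _ (fun i _ => (hidx _ (ha1 i)).1) _ fun i _ => (hidx _ (hb1 i)).2) hvL hvU

theorem eventually_disc_le {n : ℕ} {ω : ℕ → Fin n → ℝ} (hud : IsUD n ω) {ε : ℝ} (hε : 0 < ε) :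
    ∀ᶠ N in atTop, Disc n ω N ≤ ε := by
  obtain ⟨m, hm⟩ := exists_nat_gt (4 * n / ε)
  have hm' : (0 : ℝ) < m := (by positivity : (0 : ℝ) ≤ 4 * n / ε).trans_lt hm
  have hmesh : (n : ℝ) * (2 * (1 / m)) ≤ ε / 2 := by
    rw [div_lt_iff₀ hε] at hm
    rw [← mul_assoc, mul_one_div, div_le_div_iff₀ hm' two_pos]
    linarith
  have hm0 : 0 < m := by exact_mod_cast hm'
  filter_upwards [eventually_forall_grid_abs_le hud hm0 (half_pos hε)] with N hN
  refine Real.sSup_le ?_ hε.le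
  rintro _ ⟨R, hR, rfl⟩
  linarith [abs_countIn_div_sub_le_of_forall_grid hm0 hN hR]

-- Equals `0` when no `k ≤ N` has `Ns k ≤ N`.
open Classical in
def floorIndex (Ns : ℕ → ℕ) (N : ℕ) : ℕ := Nat.findGreatest (fun k => Ns k ≤ N) N

section floorIndex

variable {Ns : ℕ → ℕ}

lemma monotone_floorIndex (Ns : ℕ → ℕ) : Monotone (floorIndex Ns) := fun _ _ h =>
  Nat.findGreatest_mono (fun _ hk => hk.trans h) h

lemma le_floorIndex (hNs : StrictMono Ns) {k N : ℕ} (h : Ns k ≤ N) : k ≤ floorIndex Ns N :=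
  Nat.le_findGreatest ((hNs.id_le k).trans h) h

lemma floorIndex_apply (hNs : StrictMono Ns) (k : ℕ) : floorIndex Ns (Ns k) = k := by
  refine le_antisymm ?_ (le_floorIndex hNs le_rfl)
  have : Ns (floorIndex Ns (Ns k)) ≤ Ns k :=
    Nat.findGreatest_spec (P := fun j => Ns j ≤ Ns k) (hNs.id_le k) le_rfl
  exact hNs.le_iff_le.1 this

lemma tendsto_floorIndex_atTop (hNs : StrictMono Ns) : Tendsto (floorIndex Ns) atTop atTop :=
  tendsto_atTop.2 fun k => (eventually_ge_atTop (Ns k)).mono fun _ => le_floorIndex hNs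

end floorIndex

lemma exists_strictMono_lt_inv_two_mul_add_one {D : ℕ → ℝ}
    (hD : ∀ ε > 0, ∃ᶠ N in atTop, D N < ε) :
    ∃ P : ℕ → ℕ, StrictMono P ∧ ∀ k, D (P (k + 1)) < 1 / (2 * P k + 1) := by
  have step : ∀ M : ℕ, ∃ N, M < N ∧ D N < 1 / (2 * M + 1) := fun M =>
    ((hD _ (by positivity)).and_eventually (eventually_gt_atTop M)).exists.imp fun _ h => h.symm
  choose f hf using step
  refine ⟨fun k => f^[k] 0, strictMono_nat_of_lt_succ fun k => ?_, fun k => ?_⟩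
  · simpa only [Function.iterate_succ_apply'] using (hf _).1
  · simpa only [Function.iterate_succ_apply'] using (hf _).2

theorem exists_isDSS_of_frequently_disc_lt {n : ℕ} {ω : ℕ → Fin n → ℝ}
    (h : ∀ ε > 0, ∃ᶠ N in atTop, Disc n ω N < ε) : ∃ Nseq v, IsDSS n ω Nseq v := by
  obtain ⟨P, hP, hDP⟩ := exists_strictMono_lt_inv_two_mul_add_one h
  set Ns : ℕ → ℕ := fun k => P (k + 1)
  set u : ℕ → ℝ := fun k => 1 / (2 * P k + 1)
  have hNs : StrictMono Ns := fun _ _ h => hP (Nat.succ_lt_succ h)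
  have hu : Antitone u := fun i j hij => by
    have : (P i : ℝ) ≤ P j := by exact_mod_cast hP.monotone hij
    dsimp only [u]
    gcongr
  have hu0 : Tendsto u atTop (nhds 0) := by
    have : Tendsto (fun k => 2 * (P k : ℝ) + 1) atTop atTop :=
      tendsto_atTop_add_const_right _ 1
        ((tendsto_natCast_atTop_atTop.comp hP.tendsto_atTop).const_mul_atTop two_pos)
    simpa only [u, one_div, Function.comp_def] using tendsto_inv_atTop_zero.comp this
  have hNu : ∀ k, (Ns k : ℝ) * u (k + 1) ≤ 1 / 2 := fun k => by
    dsimp only [u, Ns]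
    rw [mul_one_div, div_le_iff₀ (by positivity)]
    linarith
  refine ⟨Ns, u ∘ floorIndex Ns, hNs, fun k => (Nat.zero_le _).trans_lt (hP k.lt_succ_self),
    fun N => by dsimp only [Function.comp, u]; positivity,
    hu.comp_monotone (monotone_floorIndex Ns), hu0.comp (tendsto_floorIndex_atTop hNs),
    fun k => ?_, ?_⟩
  · simpa only [Function.comp, floorIndex_apply hNs] using hDP k
  · calc limsup (fun k => (Ns k : ℝ) * (u ∘ floorIndex Ns) (Ns (k + 1))) atTop
        ≤ 1 / 2 := limsup_le_of_le (isCoboundedUnder_le_of_le atTop fun k =>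
          by dsimp only [Function.comp, u]; positivity)
          (.of_forall fun k => by simpa only [Function.comp, floorIndex_apply hNs] using hNu k)
      _ < 1 := by norm_num

theorem stmt_15_general (n : ℕ) (ω : ℕ → Fin n → ℝ)
    (hud : IsUD n ω) :
    ∃ (Nseq : ℕ → ℕ) (v : ℕ → ℝ), IsDSS n ω Nseq v :=
  exists_isDSS_of_frequently_disc_lt fun _ hε =>
    ((eventually_disc_le hud (half_pos hε)).mono fun _ h => h.trans_lt (half_lt_self hε)).frequently

/-- Every uniformly distributed sequence is an `(𝒩,v)`-discrepancy satisfying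
sequence for a suitable choice of `𝒩` and `v`. -/
theorem stmt_15 (n : ℕ) (ω : ℕ → Fin n → ℝ) (hω : ∀ j, ω j ∈ cube n)
    (hud : IsUD n ω) :
    ∃ (Nseq : ℕ → ℕ) (v : ℕ → ℝ), IsDSS n ω Nseq v :=
  stmt_15_general n ω hud
end
end

section
/- Let α ∈ ℝ be irrational and not badly approximable (i.e. liminf_{q→∞} q·‖qα‖ = 0, where ‖x‖ denotes the distance from x to the nearest integer). For the sequence ω = ({jα})_{j≥1} of fractional parts in [0,1], there exists a positive function ψ : ℕ → ℝ_+ such that Σ_{j=1}^∞ ψ(j) = ∞ and λ(W_ω(ψ)) < 1. -/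
open MeasureTheory Filter Set Metric
open scoped ENNReal NNReal

noncomputable section

/-- `W_ω(ψ)`: points of `[0,1]` with `|x - ω j| < ψ j` for infinitely many `j`. -/
def W1 (ω : ℕ → ℝ) (ψ : ℕ → ℝ) : Set ℝ :=
  {x | x ∈ Set.Icc (0 : ℝ) 1 ∧ ∃ᶠ j in Filter.atTop, |x - ω j| < ψ j}

open Classical in
/-- `A(R; N, ω)`: the number of indices `1 ≤ j ≤ N` with `ω j ∈ R`. -/
def countIn1 (ω : ℕ → ℝ) (R : Set ℝ) (N : ℕ) : ℕ :=
  ((Finset.Icc 1 N).filter fun j => ω j ∈ R).card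

/-- The discrepancy `D_N(ω)` of a sequence in `[0,1]`: supremum over intervals
`[a,b) ⊆ [0,1]` of `|A([a,b);N,ω)/N - (b - a)|`. -/
def Disc1 (ω : ℕ → ℝ) (N : ℕ) : ℝ :=
  sSup {d | ∃ a b : ℝ, 0 ≤ a ∧ a < b ∧ b ≤ 1 ∧
    d = |(countIn1 ω (Set.Ico a b) N : ℝ) / N - (b - a)|}

/-- `ω` is uniformly distributed on `[0,1]`. -/
def IsUD1 (ω : ℕ → ℝ) : Prop :=
  ∀ a b : ℝ, 0 ≤ a → a < b → b ≤ 1 →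
    Filter.Tendsto (fun N => (countIn1 ω (Set.Ico a b) N : ℝ) / N)
      Filter.atTop (nhds (b - a))

/-!
Since `liminf q‖qα‖ = 0`, there are `q_k ≥ k + 1` with `q_k‖q_kα‖ < 4^{-k}`. On the `2^k` multiples
`j = m q_k`, `m ≤ 2^k`, we have `‖jα‖ < 2^{-k}`, so `{jα}` lies within `2^{-k}` of `0` or `1`.
Give such `j` the weight `2^{-k}` (for the least such `k`) and every other `j` the weight `2^{-j}`.
Each block of multiples then contributes at least `1` to `∑ ψ`, which diverges; but a point
`x ∈ (0,1)` is within `2^{-k}` of such a `{jα}` only if `min(x, 1 - x) < 2^{1-k}`, so only finitely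
many of these `j` count, and the rest of `W(ψ)` is null by Borel–Cantelli.
-/

open scoped Topology

def dirichletProduct (α : ℝ) (q : ℕ) : ℝ :=
  (q : ℝ) * |(q : ℝ) * α - (round ((q : ℝ) * α) : ℤ)|

theorem frequently_dirichletProduct_le_one {α : ℝ} (hα : Irrational α) :
    ∃ᶠ q in atTop, dirichletProduct α q ≤ 1 := by
  rw [frequently_atTop]
  intro N
  have hsmall : ∀ᶠ n : ℕ in atTop,
      ∀ k ∈ Finset.Ico 1 N, 1 / ((n : ℝ) + 1) < |(k : ℝ) * α - round ((k : ℝ) * α)| := by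
    refine (eventually_all_finset _).2 fun k hk => ?_
    have hk_irr : Irrational ((k : ℝ) * α) :=
      hα.natCast_mul (by have := (Finset.mem_Ico.1 hk).1; omega)
    exact tendsto_one_div_add_atTop_nhds_zero_nat.eventually
      (gt_mem_nhds (abs_pos.2 (sub_ne_zero.2 (hk_irr.ne_int _))))
  obtain ⟨n, hn, hnN⟩ := (hsmall.and (eventually_ge_atTop (max N 1))).exists
  obtain ⟨k, hk0, hkn, hk⟩ := Real.exists_nat_abs_mul_sub_round_le α (n := n) (by omega)
  refine ⟨k, ?_, ?_⟩
  · by_contra! hkN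
    exact (hn k (Finset.mem_Ico.2 ⟨hk0, hkN⟩)).not_ge hk
  · calc dirichletProduct α k ≤ n * (1 / ((n : ℝ) + 1)) :=
          mul_le_mul (by exact_mod_cast hkn) hk (abs_nonneg _) n.cast_nonneg
      _ ≤ 1 := by rw [mul_one_div, div_le_one (by positivity)]; linarith

-- In `ℝ`, the `liminf` of a sequence tending to `∞` is the junk value `0`; Dirichlet's theorem
-- excludes this case.
theorem frequently_dirichletProduct_lt_of_liminf_lt {α : ℝ} (hα : Irrational α) {ε : ℝ}
    (h : liminf (dirichletProduct α) atTop < ε) : ∃ᶠ q in atTop, dirichletProduct α q < ε := by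
  have hcobdd : IsCoboundedUnder (· ≥ ·) atTop (dirichletProduct α) :=
    ⟨1, fun a ha => by
      obtain ⟨q, hq1, hqa⟩ := ((frequently_dirichletProduct_le_one hα).and_eventually ha).exists
      exact hqa.trans hq1⟩
  exact frequently_lt_of_liminf_lt hcobdd h

theorem abs_mul_mul_sub_round_le (α : ℝ) (m : ℕ) {q : ℕ} (hq : 1 ≤ q) :
    |((m * q : ℕ) : ℝ) * α - ((m * round ((q : ℝ) * α) : ℤ) : ℝ)| ≤ m * dirichletProduct α q := by
  have hsplit : ((m * q : ℕ) : ℝ) * α - ((m * round ((q : ℝ) * α) : ℤ) : ℝ)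
      = m * ((q : ℝ) * α - round ((q : ℝ) * α)) := by push_cast; ring
  rw [hsplit, abs_mul, Nat.abs_cast, dirichletProduct]
  gcongr
  exact le_mul_of_one_le_left (abs_nonneg _) (by exact_mod_cast hq)

section LevelWeight

variable (S : ℕ → Finset ℕ)

open Classical in
def levelWeight (j : ℕ) : ℝ :=
  if h : ∃ k, j ∈ S k then (1 / 2) ^ Nat.find h else 0

variable {S}

theorem levelWeight_nonneg (j : ℕ) : 0 ≤ levelWeight S j := by
  unfold levelWeight; split <;> positivity

theorem pow_le_levelWeight {j k : ℕ} (hj : j ∈ S k) : (1 / 2 : ℝ) ^ k ≤ levelWeight S j := by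
  have h : ∃ k, j ∈ S k := ⟨k, hj⟩
  rw [levelWeight, dif_pos h]
  exact pow_le_pow_of_le_one (by norm_num) (by norm_num) (Nat.find_le hj)

theorem exists_mem_of_levelWeight_pos {j : ℕ} (hj : 0 < levelWeight S j) :
    ∃ k, j ∈ S k ∧ levelWeight S j = (1 / 2) ^ k := by
  by_cases h : ∃ k, j ∈ S k
  · exact ⟨Nat.find h, Nat.find_spec h, by rw [levelWeight, dif_pos h]⟩
  · rw [levelWeight, dif_neg h] at hj
    exact (lt_irrefl 0 hj).elim

theorem levelWeight_le_of_notMem {j K : ℕ} (hj : j ∉ (Finset.range K).biUnion S) :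
    levelWeight S j ≤ (1 / 2) ^ K := by
  rcases (levelWeight_nonneg j).eq_or_lt with h | h
  · rw [← h]; positivity
  obtain ⟨k, hjk, hk⟩ := exists_mem_of_levelWeight_pos h
  have hKk : K ≤ k := by
    by_contra! hkK
    exact hj (Finset.mem_biUnion.2 ⟨k, Finset.mem_range.2 hkK, hjk⟩)
  rw [hk]
  exact pow_le_pow_of_le_one (by norm_num) (by norm_num) hKk

theorem tendsto_levelWeight_atTop : Tendsto (levelWeight S) atTop (𝓝 0) := by
  refine tendsto_order.2 ⟨fun a ha => .of_forall fun j => ha.trans_le (levelWeight_nonneg j),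
    fun a ha => ?_⟩
  obtain ⟨K, hK⟩ := exists_pow_lt_of_lt_one ha (by norm_num : (1 / 2 : ℝ) < 1)
  have hfar : ∀ᶠ j in atTop, j ∉ (Finset.range K).biUnion S := by
    simpa [Nat.cofinite_eq_atTop] using
      ((Finset.range K).biUnion S).finite_toSet.eventually_cofinite_notMem
  exact hfar.mono fun j hj => (levelWeight_le_of_notMem hj).trans_lt hK

theorem one_le_sum_levelWeight {k : ℕ} (hcard : (S k).card = 2 ^ k) :
    1 ≤ ∑ j ∈ S k, levelWeight S j := by
  calc (1 : ℝ) = (S k).card • (1 / 2 : ℝ) ^ k := by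
        rw [hcard, nsmul_eq_mul, Nat.cast_pow, Nat.cast_ofNat, ← mul_pow]; norm_num
    _ ≤ ∑ j ∈ S k, levelWeight S j :=
        Finset.card_nsmul_le_sum _ _ _ fun j hj => pow_le_levelWeight hj

end LevelWeight

theorem not_summable_of_one_le_sum {f : ℕ → ℝ} {S : ℕ → Finset ℕ}
    (hS : ∀ N, ∃ k, ∀ j ∈ S k, N ≤ j) (hf : ∀ k, 1 ≤ ∑ j ∈ S k, f j) : ¬ Summable f := by
  intro hsum
  obtain ⟨T, hT⟩ := summable_iff_vanishing.1 hsum (Iio 1) (Iio_mem_nhds one_pos)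
  obtain ⟨k, hk⟩ := hS (T.sup id + 1)
  have hdisj : Disjoint (S k) T := Finset.disjoint_left.2 fun j hjS hjT => by
    have hjT' : j ≤ T.sup id := Finset.le_sup (f := id) hjT
    have hjS' := hk j hjS
    omega
  exact (hf k).not_gt (hT _ hdisj)

theorem min_lt_two_mul_of_abs_sub_fract_lt {t x r : ℝ} {n : ℤ} (ht : |t - n| < r)
    (hx : |x - Int.fract t| < r) : min x (1 - x) < 2 * r := by
  rw [abs_lt] at ht hx
  rw [← Int.self_sub_floor] at hx
  rcases le_or_gt n ⌊t⌋ with hn | hn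
  · have : (n : ℝ) ≤ ⌊t⌋ := by exact_mod_cast hn
    exact (min_le_left _ _).trans_lt (by linarith)
  · have : (⌊t⌋ : ℝ) + 1 ≤ n := by exact_mod_cast hn
    exact (min_le_right _ _).trans_lt (by linarith)

theorem volume_limsup_ball_eq_zero (c r : ℕ → ℝ) (hr : Summable r) :
    volume (limsup (fun j => ball (c j) (r j)) atTop) = 0 := by
  refine measure_limsup_atTop_eq_zero ?_
  simp_rw [Real.volume_ball]
  exact (hr.mul_left 2).tsum_ofReal_ne_top

theorem W1_fract_max_subset (t φ b : ℕ → ℝ) (hb : ∀ j, 0 < b j → ∃ n : ℤ, |t j - n| < b j)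
    (hb_lim : Tendsto b atTop (𝓝 0)) :
    W1 (fun j => Int.fract (t j)) (fun j => max (φ j) (b j)) ⊆
      {0, 1} ∪ limsup (fun j => ball (Int.fract (t j)) (φ j)) atTop := by
  rintro x ⟨⟨hx0, hx1⟩, hxW⟩
  by_cases hx : x = 0 ∨ x = 1
  · exact Or.inl hx
  right
  have hd : 0 < min x (1 - x) / 2 := by
    push Not at hx
    have := hx0.lt_of_ne' hx.1
    have := hx1.lt_of_ne hx.2
    exact half_pos (lt_min (by linarith) (by linarith))
  have hfar : ∀ᶠ j in atTop, ¬ |x - Int.fract (t j)| < b j :=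
    (hb_lim.eventually (gt_mem_nhds hd)).mono fun j hbj hxj => by
      obtain ⟨n, hn⟩ := hb j ((abs_nonneg _).trans_lt hxj)
      linarith [min_lt_two_mul_of_abs_sub_fract_lt hn hxj]
  rw [mem_limsup_iff_frequently_mem]
  refine (hxW.and_eventually hfar).mono fun j ⟨hxj, hxb⟩ => ?_
  rw [mem_ball, Real.dist_eq]
  exact (lt_max_iff.1 hxj).resolve_right hxb

theorem volume_W1_fract_max_eq_zero (t φ b : ℕ → ℝ) (hφ : Summable φ)
    (hb : ∀ j, 0 < b j → ∃ n : ℤ, |t j - n| < b j) (hb_lim : Tendsto b atTop (𝓝 0)) :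
    volume (W1 (fun j => Int.fract (t j)) (fun j => max (φ j) (b j))) = 0 :=
  measure_mono_null (W1_fract_max_subset t φ b hb hb_lim)
    (measure_union_null (((countable_singleton 1).insert 0).measure_zero _)
      (volume_limsup_ball_eq_zero _ φ hφ))

def multiples (M q : ℕ) : Finset ℕ := (Finset.Icc 1 M).image (· * q)

theorem card_multiples (M : ℕ) {q : ℕ} (hq : 1 ≤ q) : (multiples M q).card = M := by
  rw [multiples, Finset.card_image_of_injective _ (mul_left_injective₀ (by omega)),
    Nat.card_Icc, Nat.add_sub_cancel]

theorem le_of_mem_multiples {M q j : ℕ} (hj : j ∈ multiples M q) : q ≤ j := by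
  obtain ⟨m, hm, rfl⟩ := Finset.mem_image.1 hj
  exact Nat.le_mul_of_pos_left q (Finset.mem_Icc.1 hm).1

theorem exists_int_abs_sub_lt_of_mem_multiples {α : ℝ} {k q j : ℕ} (hq : 1 ≤ q)
    (hαq : dirichletProduct α q < (1 / 4) ^ k) (hj : j ∈ multiples (2 ^ k) q) :
    ∃ n : ℤ, |(j : ℝ) * α - n| < (1 / 2) ^ k := by
  obtain ⟨m, hm, rfl⟩ := Finset.mem_image.1 hj
  have hm : (m : ℝ) ≤ 2 ^ k := by exact_mod_cast (Finset.mem_Icc.1 hm).2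
  refine ⟨m * round ((q : ℝ) * α), ?_⟩
  calc _ ≤ m * dirichletProduct α q := abs_mul_mul_sub_round_le α m hq
    _ ≤ 2 ^ k * dirichletProduct α q := by gcongr; exact mul_nonneg q.cast_nonneg (abs_nonneg _)
    _ < 2 ^ k * (1 / 4) ^ k := by gcongr
    _ = (1 / 2) ^ k := by rw [← mul_pow]; norm_num

/-- Remark (via Kurzweil's theorem): for an irrational, not badly approximable `α`,
there is a positive `ψ` with divergent series for which `W_{({jα})}(ψ)` does not
have full measure. -/
theorem stmt_16 (α : ℝ) (hα : Irrational α)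
    (hnba : Filter.liminf
      (fun q : ℕ => (q : ℝ) * |(q : ℝ) * α - (round ((q : ℝ) * α) : ℤ)|)
      Filter.atTop = 0) :
    ∃ ψ : ℕ → ℝ, (∀ j, 0 < ψ j) ∧ ¬ Summable ψ ∧
      volume (W1 (fun j => Int.fract (j * α)) ψ) < 1 := by
  choose q hq_ge hq_small using fun k : ℕ => frequently_atTop.1
    (frequently_dirichletProduct_lt_of_liminf_lt hα (ε := (1 / 4) ^ k) (hnba ▸ by positivity))
      (k + 1)
  have hq_pos (k : ℕ) : 1 ≤ q k := by have := hq_ge k; omega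
  set S := fun k => multiples (2 ^ k) (q k)
  refine ⟨fun j => max ((1 / 2) ^ j) (levelWeight S j), fun j => lt_max_of_lt_left (by positivity),
    ?_, ?_⟩
  · refine not_summable_of_one_le_sum (S := S)
      (fun N => ⟨N, fun j hj => by have := le_of_mem_multiples hj; have := hq_ge N; omega⟩)
      fun k => ?_
    calc (1 : ℝ) ≤ ∑ j ∈ S k, levelWeight S j := one_le_sum_levelWeight (card_multiples _ (hq_pos k))
      _ ≤ _ := Finset.sum_le_sum fun j _ => le_max_right _ _
  · have hb (j : ℕ) (hj : 0 < levelWeight S j) :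
        ∃ n : ℤ, |(j : ℝ) * α - n| < levelWeight S j := by
      obtain ⟨k, hjk, hk⟩ := exists_mem_of_levelWeight_pos hj
      exact hk ▸ exists_int_abs_sub_lt_of_mem_multiples (hq_pos k) (hq_small k) hjk
    rw [volume_W1_fract_max_eq_zero (fun j : ℕ => (j : ℝ) * α) _ _ summable_geometric_two hb
      tendsto_levelWeight_atTop]
    exact zero_lt_one
end
end
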